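/- In the polynomial ring ℤ[x_1,...,x_n, y_1,...,y_l], the product ∏_{1≤i≤n} ∏_{1≤j≤l}(1 + x_i y_j) equals the sum over partitions λ contained in the n×l rectangle of s_λ(x_1,...,x_n)·s_{λᵀ}(y_1,...,y_l), where s_μ denotes the Schur polynomial and λᵀ the conjugate partition. -/

import Mathlib

open MvPolynomial

/-- The (finite) set of semistandard Young tableaux of shape `μ` (a partition with at
most `r` parts, each at most `c`), with entries in `{1,…,e}`, encoded as fillings of
the `r × c` rectangle by `{0,1,…,e}` that vanish outside the diagram of `μ`. -/
def ssytFinset (r c e : ℕ) (μ : Fin r → ℕ) : Finset (Fin r × Fin c → Fin (e + 1)) :=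
  Finset.univ.filter (fun T =>
    (∀ (i : Fin r) (j : Fin c), (j : ℕ) < μ i → 1 ≤ (T (i, j) : ℕ)) ∧
    (∀ (i : Fin r) (j : Fin c), ¬ (j : ℕ) < μ i → (T (i, j) : ℕ) = 0) ∧
    (∀ (i : Fin r) (j j' : Fin c), j ≤ j' → (j' : ℕ) < μ i → T (i, j) ≤ T (i, j')) ∧
    (∀ (i i' : Fin r) (j : Fin c), i < i' → (j : ℕ) < μ i' → (T (i, j) : ℕ) < (T (i', j) : ℕ)))

/-- The Schur polynomial `s_μ(x_1,…,x_e)`, defined as the generating polynomial of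
semistandard Young tableaux of shape `μ` with entries in `{1,…,e}`: the tableau `T`
contributes the monomial `∏_k x_k ^ (number of entries of T equal to k)`. -/
noncomputable def schurPoly (r c e : ℕ) (μ : Fin r → ℕ) : MvPolynomial (Fin e) ℤ :=
  ∑ T ∈ ssytFinset r c e μ,
    ∏ k : Fin e,
      X k ^ (Finset.univ.filter (fun p : Fin r × Fin c => (T p : ℕ) = (k : ℕ) + 1)).card

/-- The conjugate (transpose) partition: its `j`-th part is `#{i : μ i > j}`. -/
def conjPart {n : ℕ} (l : ℕ) (μ : Fin n → ℕ) : Fin l → ℕ :=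
  fun j => (Finset.univ.filter (fun i : Fin n => (j : ℕ) < μ i)).card

/-!
Removing the largest letter from a semistandard tableau of shape `μ` leaves a tableau of a shape
`ν` interlacing with `μ` (`μ / ν` is a horizontal strip), so `s_μ(x₁, …, xₑ)` is the generating
polynomial of Gelfand–Tsetlin patterns with top row `μ`; conjugation turns horizontal strips into
vertical ones. The identity follows by induction on the number of `y`-variables, because
multiplying by `∏ᵢ (1 + xᵢ t)` is the Pieri rule `s_ρ(x) ∏ᵢ (1 + xᵢ t) = ∑ s_λ(x) t ^ |λ / ρ|`,
summed over the vertical strips `λ / ρ`. The Pieri rule is proved by induction on the number of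
`x`-variables: its inductive step is a local commutation between adding a vertical and a
horizontal strip, whose two sides factor over the rows and differ by a factor `1 + x t` that
telescopes from the first row to the last.
-/

open Finset

lemma Fin.lt_card_iff_mem_of_isLowerSet {c : ℕ} {s : Finset (Fin c)}
    (hs : IsLowerSet (s : Set (Fin c))) (j : Fin c) : (j : ℕ) < #s ↔ j ∈ s := by
  rcases hs.eq_univ_or_Iio with h | ⟨a, h⟩
  · rw [coe_eq_univ.mp h]
    simp
  · rw [show s = Iio a from coe_injective (by simpa using h), Fin.card_Iio, mem_Iio, Fin.lt_def]

lemma Nat.le_of_forall_fin_lt {a b c : ℕ} (hac : a ≤ c)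
    (h : ∀ j : Fin c, (j : ℕ) < a → (j : ℕ) < b) : a ≤ b := by
  by_contra! hba
  exact lt_irrefl b (h ⟨b, by omega⟩ hba)

lemma Finset.prod_range_mul_eq_mul_prod_range {M : Type*} [CommMonoid M] {B A c : ℕ → M}
    {N : ℕ} (h : ∀ i < N, B i * c (i + 1) = A i * c i) :
    (∏ i ∈ range N, B i) * c N = c 0 * ∏ i ∈ range N, A i := by
  induction N with
  | zero => simp
  | succ N ih =>
    calc (∏ i ∈ range (N + 1), B i) * c (N + 1) = (∏ i ∈ range N, B i) * (B N * c (N + 1)) := by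
          rw [prod_range_succ, mul_assoc]
      _ = ((∏ i ∈ range N, B i) * c N) * A N := by rw [h N (by omega)]; ac_rfl
      _ = c 0 * ∏ i ∈ range (N + 1), A i := by
          rw [ih fun i hi => h i (by omega), prod_range_succ, mul_assoc]

lemma Finset.sum_Icc_self_add_one {M : Type*} [AddCommMonoid M] (f : ℕ → M) (b : ℕ) :
    ∑ j ∈ Icc b (b + 1), f j = f b + f (b + 1) := by
  rw [sum_Icc_succ_top (by omega), Icc_self, sum_singleton]

lemma Finset.sum_filter_piFinset_forall_prod {κ R : Type*} [DecidableEq κ] [CommSemiring R]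
    {N : ℕ} (I : Fin N → Finset κ) (P : Fin N → κ → Prop) [∀ i, DecidablePred (P i)]
    (f : Fin N → κ → R) :
    ∑ lam ∈ Fintype.piFinset I with ∀ i, P i (lam i), ∏ i, f i (lam i) =
      ∏ i, ∑ j ∈ I i, if P i j then f i j else 0 := by
  rw [prod_univ_sum, sum_filter]
  exact sum_congr rfl fun lam _ => by simp [Fintype.prod_ite_zero]

lemma Antitone.lt_card_filter_lt_iff {n : ℕ} {β : Fin n → ℕ} (hβ : Antitone β) (t : ℕ)
    (k : Fin n) : (k : ℕ) < #{k' | t < β k'} ↔ t < β k := by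
  rw [Fin.lt_card_iff_mem_of_isLowerSet, mem_filter]
  · simp
  · intro k k' hkk' hk'
    simp only [coe_filter, mem_univ, true_and, Set.mem_ofPred_eq] at hk' ⊢
    exact hk'.trans_le (hβ hkk')

namespace DualCauchy

/-- `μ / ν` is a horizontal strip, i.e. the parts interlace: `μ₀ ≥ ν₀ ≥ μ₁ ≥ ν₁ ≥ ⋯`. -/
def IsHorizontalStrip {r : ℕ} (ν μ : Fin r → ℕ) : Prop :=
  (∀ i, ν i ≤ μ i) ∧ ∀ i j, i < j → μ j ≤ ν i

def IsVerticalStrip {r : ℕ} (ρ lam : Fin r → ℕ) : Prop :=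
  Antitone ρ ∧ Antitone lam ∧ ∀ i, ρ i ≤ lam i ∧ lam i ≤ ρ i + 1

def skewSize {r : ℕ} (μ ν : Fin r → ℕ) : ℕ := ∑ i, (μ i - ν i)

section Strips

variable {r : ℕ}

lemma IsHorizontalStrip.antitone_left {ν μ : Fin r → ℕ} (h : IsHorizontalStrip ν μ) :
    Antitone ν :=
  antitone_iff_forall_lt.mpr fun _ _ hij => (h.1 _).trans (h.2 _ _ hij)

lemma IsHorizontalStrip.antitone_right {ν μ : Fin r → ℕ} (h : IsHorizontalStrip ν μ) :
    Antitone μ :=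
  antitone_iff_forall_lt.mpr fun _ _ hij => (h.2 _ _ hij).trans (h.1 _)

instance (ν μ : Fin r → ℕ) : Decidable (IsHorizontalStrip ν μ) := by
  unfold IsHorizontalStrip; infer_instance

instance (ρ lam : Fin r → ℕ) : Decidable (IsVerticalStrip ρ lam) := by
  unfold IsVerticalStrip Antitone; infer_instance

def horizontalStripsBelow (μ : Fin r → ℕ) : Finset (Fin r → ℕ) :=
  {ν ∈ Fintype.piFinset fun i => Iic (μ i) | IsHorizontalStrip ν μ}

def verticalStripsBelow (lam : Fin r → ℕ) : Finset (Fin r → ℕ) :=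
  {ρ ∈ Fintype.piFinset fun i => Iic (lam i) | IsVerticalStrip ρ lam}

def verticalStripsAbove (ρ : Fin r → ℕ) : Finset (Fin r → ℕ) :=
  {lam ∈ Fintype.piFinset fun i => Iic (ρ i + 1) | IsVerticalStrip ρ lam}

@[simp]
lemma mem_horizontalStripsBelow {ν μ : Fin r → ℕ} :
    ν ∈ horizontalStripsBelow μ ↔ IsHorizontalStrip ν μ := by
  simpa [horizontalStripsBelow] using fun h _ => h.1 _

@[simp]
lemma mem_verticalStripsBelow {ρ lam : Fin r → ℕ} :
    ρ ∈ verticalStripsBelow lam ↔ IsVerticalStrip ρ lam := by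
  simpa [verticalStripsBelow] using fun h _ => (h.2.2 _).1

@[simp]
lemma mem_verticalStripsAbove {ρ lam : Fin r → ℕ} :
    lam ∈ verticalStripsAbove ρ ↔ IsVerticalStrip ρ lam := by
  simpa [verticalStripsAbove] using fun h _ => (h.2.2 _).2

end Strips

/-- The generating polynomial of Gelfand–Tsetlin patterns with top row `μ`: chains
`0 = μ⁰ ⊆ μ¹ ⊆ ⋯ ⊆ μᵉ = μ` of horizontal strips, weighted by `∏ₖ xₖ ^ |μᵏ⁺¹ / μᵏ|`. -/
noncomputable def gtPoly {r : ℕ} : (e : ℕ) → (Fin r → ℕ) → MvPolynomial (Fin e) ℤ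
  | 0, μ => if μ = 0 then 1 else 0
  | e + 1, μ => ∑ ν ∈ horizontalStripsBelow μ,
      rename Fin.castSucc (gtPoly e ν) * X (Fin.last e) ^ skewSize μ ν

section GelfandTsetlin

variable {r e : ℕ}

lemma aeval_gtPoly_succ {S : Type*} [CommRing S] (x : Fin (e + 1) → S) (μ : Fin r → ℕ) :
    aeval x (gtPoly (e + 1) μ) = ∑ ν ∈ horizontalStripsBelow μ,
      aeval (x ∘ Fin.castSucc) (gtPoly e ν) * x (Fin.last e) ^ skewSize μ ν := by
  simp [gtPoly, aeval_rename]

lemma antitone_of_gtPoly_ne_zero {μ : Fin r → ℕ} (h : gtPoly e μ ≠ 0) : Antitone μ := by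
  cases e with
  | zero =>
    by_contra hμ
    refine h (if_neg fun h0 => hμ ?_)
    rw [h0]
    exact antitone_const
  | succ e =>
    obtain ⟨ν, hν, -⟩ := exists_ne_zero_of_sum_ne_zero h
    exact (mem_horizontalStripsBelow.mp hν).antitone_right

lemma gtPoly_eq_zero_of_le_of_ne_zero {μ : Fin r → ℕ} {i : Fin r} (hi : e ≤ i) (hμ : μ i ≠ 0) :
    gtPoly e μ = 0 := by
  induction e generalizing μ i with
  | zero => exact if_neg fun h0 => hμ (by simp [h0])
  | succ e ih =>
    refine sum_eq_zero fun ν hν => ?_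
    have hi' : (i : ℕ) - 1 < r := by omega
    have hν : ν ⟨i - 1, hi'⟩ ≠ 0 := by
      have := (mem_horizontalStripsBelow.mp hν).2 ⟨i - 1, hi'⟩ i (Fin.lt_def.mpr (by simp; omega))
      omega
    rw [ih (by simp; omega) hν, map_zero, zero_mul]

@[simp]
lemma gtPoly_zero_right (e : ℕ) : gtPoly e (0 : Fin r → ℕ) = 1 := by
  induction e with
  | zero => exact if_pos rfl
  | succ e ih =>
    have : horizontalStripsBelow (0 : Fin r → ℕ) = {0} := by
      ext ν
      simp only [mem_horizontalStripsBelow, mem_singleton, IsHorizontalStrip, Pi.zero_apply,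
        nonpos_iff_eq_zero, funext_iff]
      exact ⟨fun h => h.1, fun h => ⟨h, by simp⟩⟩
    simp [gtPoly, this, ih, skewSize]

end GelfandTsetlin

section Tableaux

variable {r c e : ℕ}

lemma mem_ssytFinset {μ : Fin r → ℕ} {T : Fin r × Fin c → Fin (e + 1)} :
    T ∈ ssytFinset r c e μ ↔
      (∀ i j, (T (i, j) : ℕ) ≠ 0 ↔ (j : ℕ) < μ i) ∧
      (∀ i (j j' : Fin c), j ≤ j' → (j' : ℕ) < μ i → (T (i, j) : ℕ) ≤ T (i, j')) ∧
      (∀ i i' (j : Fin c), i < i' → (j : ℕ) < μ i' → (T (i, j) : ℕ) < T (i', j)) := by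
  simp only [ssytFinset, mem_filter, mem_univ, true_and, Fin.le_def]
  refine ⟨fun ⟨h₁, h₀, hrow, hcol⟩ => ⟨fun i j => ?_, hrow, hcol⟩,
    fun ⟨hsupp, hrow, hcol⟩ => ⟨fun i j hj => ?_, fun i j hj => ?_, hrow, hcol⟩⟩
  · by_cases hj : (j : ℕ) < μ i
    · have := h₁ i j hj; omega
    · have := h₀ i j hj; omega
  · have := (hsupp i j).mpr hj; omega
  · by_contra h; exact hj ((hsupp i j).mp h)

def shapeOf {k : ℕ} (T : Fin r × Fin c → Fin k) : Fin r → ℕ :=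
  fun i => #{j | (T (i, j) : ℕ) ≠ 0}

lemma shapeOf_eq {μ : Fin r → ℕ} {T : Fin r × Fin c → Fin (e + 1)}
    (hT : T ∈ ssytFinset r c e μ) (hμc : ∀ i, μ i ≤ c) : shapeOf T = μ := by
  funext i
  rw [shapeOf, filter_congr fun j _ => (mem_ssytFinset.mp hT).1 i j, Fin.card_filter_val_lt,
    min_eq_right (hμc i)]

lemma sum_shapeOf {k : ℕ} (T : Fin r × Fin c → Fin k) :
    ∑ i, shapeOf T i = #{p | (T p : ℕ) ≠ 0} := by
  rw [card_filter, Fintype.sum_prod_type]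
  exact sum_congr rfl fun i _ => card_filter _ _

lemma ne_zero_iff_lt_shapeOf {k : ℕ} {T : Fin r × Fin c → Fin k}
    (h : ∀ i j j', j ≤ j' → (T (i, j') : ℕ) ≠ 0 → (T (i, j) : ℕ) ≠ 0) (i : Fin r) (j : Fin c) :
    (T (i, j) : ℕ) ≠ 0 ↔ (j : ℕ) < shapeOf T i := by
  rw [shapeOf, Fin.lt_card_iff_mem_of_isLowerSet]
  · simp
  · intro j' j hjj' hj'
    simp only [coe_filter, mem_univ, true_and, Set.mem_ofPred_eq] at hj' ⊢
    exact h i j j' hjj' hj'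

def eraseLast (T : Fin r × Fin c → Fin (e + 1 + 1)) : Fin r × Fin c → Fin (e + 1) :=
  fun p => if h : (T p : ℕ) ≤ e then ⟨T p, by omega⟩ else 0

def fillLast (μ : Fin r → ℕ) (T : Fin r × Fin c → Fin (e + 1)) :
    Fin r × Fin c → Fin (e + 1 + 1) :=
  fun p => if (T p : ℕ) ≠ 0 then (T p).castSucc else if (p.2 : ℕ) < μ p.1 then Fin.last _ else 0

@[simp]
lemma val_eraseLast (T : Fin r × Fin c → Fin (e + 1 + 1)) (p : Fin r × Fin c) :
    (eraseLast T p : ℕ) = if (T p : ℕ) ≤ e then (T p : ℕ) else 0 := by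
  unfold eraseLast; split_ifs <;> rfl

@[simp]
lemma val_fillLast (μ : Fin r → ℕ) (T : Fin r × Fin c → Fin (e + 1)) (p : Fin r × Fin c) :
    (fillLast μ T p : ℕ) =
      if (T p : ℕ) ≠ 0 then (T p : ℕ) else if (p.2 : ℕ) < μ p.1 then e + 1 else 0 := by
  unfold fillLast; split_ifs <;> simp

lemma eraseLast_fillLast (μ : Fin r → ℕ) (T : Fin r × Fin c → Fin (e + 1)) :
    eraseLast (fillLast μ T) = T := by
  funext p
  have := (T p).isLt
  ext
  simp only [val_eraseLast, val_fillLast]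
  split_ifs <;> omega

section EraseLast

variable {μ : Fin r → ℕ} {T : Fin r × Fin c → Fin (e + 1 + 1)}

lemma fillLast_eraseLast (hT : T ∈ ssytFinset r c (e + 1) μ) : fillLast μ (eraseLast T) = T := by
  funext ⟨i, j⟩
  have := (T (i, j)).isLt
  have := (mem_ssytFinset.mp hT).1 i j
  ext
  simp only [val_eraseLast, val_fillLast]
  split_ifs <;> omega

lemma eraseLast_ne_zero_iff (hT : T ∈ ssytFinset r c (e + 1) μ) (i : Fin r) (j : Fin c) :
    (eraseLast T (i, j) : ℕ) ≠ 0 ↔ (j : ℕ) < shapeOf (eraseLast T) i := by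
  obtain ⟨hsupp, hrow, -⟩ := mem_ssytFinset.mp hT
  refine ne_zero_iff_lt_shapeOf (fun i j j' hjj' hj' => ?_) i j
  simp only [val_eraseLast] at hj' ⊢
  have hj'μ := (hsupp i j').mp (by split_ifs at hj' <;> omega)
  have := hrow i j j' hjj' hj'μ
  have := (hsupp i j).mpr (lt_of_le_of_lt (Fin.le_def.mp hjj') hj'μ)
  split_ifs at hj' ⊢ <;> omega

lemma eraseLast_mem (hT : T ∈ ssytFinset r c (e + 1) μ) (hμ : Antitone μ) :
    eraseLast T ∈ ssytFinset r c e (shapeOf (eraseLast T)) := by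
  obtain ⟨hsupp, hrow, hcol⟩ := mem_ssytFinset.mp hT
  have hν := eraseLast_ne_zero_iff hT
  refine mem_ssytFinset.mpr ⟨hν, fun i j j' hjj' hj' => ?_, fun i i' j hii' hj => ?_⟩
  · have h' := (hν i j').mpr hj'
    have h := (hν i j).mpr (lt_of_le_of_lt (Fin.le_def.mp hjj') hj')
    simp only [val_eraseLast] at h h' ⊢
    have := hrow i j j' hjj' ((hsupp i j').mp (by split_ifs at h' <;> omega))
    split_ifs at h h' ⊢ <;> omega
  · have h' := (hν i' j).mpr hj
    simp only [val_eraseLast] at h' ⊢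
    have hj' := (hsupp i' j).mp (by split_ifs at h' <;> omega)
    have := hcol i i' j hii' hj'
    have := (hsupp i j).mpr (hj'.trans_le (hμ hii'.le))
    split_ifs at h' ⊢ <;> omega

lemma shapeOf_eraseLast_le (hT : T ∈ ssytFinset r c (e + 1) μ) (hμc : ∀ i, μ i ≤ c) (i : Fin r) :
    shapeOf (eraseLast T) i ≤ μ i := by
  rw [← congrFun (shapeOf_eq hT hμc) i]
  refine card_le_card (monotone_filter_right _ fun j _ h => ?_)
  simp only [val_eraseLast] at h
  split_ifs at h <;> omega

/-- Columns increase strictly, so no two entries `e + 1` share a column. -/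
lemma isHorizontalStrip_shapeOf_eraseLast (hT : T ∈ ssytFinset r c (e + 1) μ) (hμ : Antitone μ)
    (hμc : ∀ i, μ i ≤ c) : IsHorizontalStrip (shapeOf (eraseLast T)) μ := by
  obtain ⟨hsupp, -, hcol⟩ := mem_ssytFinset.mp hT
  refine ⟨shapeOf_eraseLast_le hT hμc, fun i i' hii' =>
    Nat.le_of_forall_fin_lt (hμc i') fun j hj => ?_⟩
  rw [← eraseLast_ne_zero_iff hT, val_eraseLast]
  have := hcol i i' j hii' hj
  have := (T (i', j)).isLt
  have := (hsupp i j).mpr (hj.trans_le (hμ hii'.le))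
  split_ifs <;> omega

lemma card_filter_eq_last (hT : T ∈ ssytFinset r c (e + 1) μ) (hμc : ∀ i, μ i ≤ c) :
    #{p | (T p : ℕ) = e + 1} = skewSize μ (shapeOf (eraseLast T)) := by
  have hsplit : #{p | (T p : ℕ) ≠ 0} =
      #{p | (eraseLast T p : ℕ) ≠ 0} + #{p | (T p : ℕ) = e + 1} := by
    simp only [card_filter, ← sum_add_distrib]
    refine sum_congr rfl fun p _ => ?_
    have := (T p).isLt
    simp only [val_eraseLast]
    split_ifs <;> omega
  rw [skewSize, sum_tsub_distrib _ fun i _ => shapeOf_eraseLast_le hT hμc i, sum_shapeOf,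
    ← shapeOf_eq hT hμc, sum_shapeOf]
  omega

lemma fillLast_mem {ν : Fin r → ℕ} {T' : Fin r × Fin c → Fin (e + 1)}
    (hνμ : IsHorizontalStrip ν μ) (hT' : T' ∈ ssytFinset r c e ν) :
    fillLast μ T' ∈ ssytFinset r c (e + 1) μ := by
  obtain ⟨hsupp, hrow, hcol⟩ := mem_ssytFinset.mp hT'
  refine mem_ssytFinset.mpr ⟨fun i j => ?_, fun i j j' hjj' hj' => ?_, fun i i' j hii' hj => ?_⟩
  · have := (hsupp i j).mp
    have := hνμ.1 i
    simp only [val_fillLast]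
    split_ifs <;> omega
  · have := (hsupp i j).mp
    have := (hsupp i j).mpr
    have := (hsupp i j').mp
    have := hrow i j j' hjj'
    have := (T' (i, j)).isLt
    have := Fin.le_def.mp hjj'
    simp only [val_fillLast]
    split_ifs <;> omega
  · have := (hsupp i j).mpr
    have := (hsupp i' j).mp
    have := hcol i i' j hii'
    have := hνμ.antitone_left hii'.le
    have := hνμ.2 i i' hii'
    have := (T' (i, j)).isLt
    simp only [val_fillLast]
    split_ifs <;> omega

end EraseLast

lemma schurPoly_succ {μ : Fin r → ℕ} (hμ : Antitone μ) (hμc : ∀ i, μ i ≤ c) :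
    schurPoly r c (e + 1) μ = ∑ ν ∈ horizontalStripsBelow μ,
      rename Fin.castSucc (schurPoly r c e ν) * X (Fin.last e) ^ skewSize μ ν := by
  have hweight : ∀ T ∈ ssytFinset r c (e + 1) μ,
      ∏ k : Fin (e + 1), (X k : MvPolynomial (Fin (e + 1)) ℤ) ^ #{p | (T p : ℕ) = k + 1} =
        rename Fin.castSucc (∏ k : Fin e, X k ^ #{p | (eraseLast T p : ℕ) = k + 1}) *
          X (Fin.last e) ^ skewSize μ (shapeOf (eraseLast T)) := by
    intro T hT
    rw [Fin.prod_univ_castSucc, map_prod, ← card_filter_eq_last hT hμc]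
    congr 1
    refine prod_congr rfl fun k _ => ?_
    have := k.isLt
    simp only [map_pow, rename_X, Fin.val_castSucc, val_eraseLast]
    congr 3 with p
    split_ifs
    · rfl
    · exact iff_of_false (by omega) not_false
  simp only [schurPoly, map_sum, sum_mul]
  rw [sum_sigma']
  refine sum_nbij' (fun T => ⟨shapeOf (eraseLast T), eraseLast T⟩) (fun p => fillLast μ p.2)
    (fun T hT => ?_) (fun p hp => ?_) (fun T hT => fillLast_eraseLast hT) (fun p hp => ?_)
    hweight
  · simp only [mem_sigma, mem_horizontalStripsBelow]
    exact ⟨isHorizontalStrip_shapeOf_eraseLast hT hμ hμc, eraseLast_mem hT hμ⟩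
  · simp only [mem_sigma, mem_horizontalStripsBelow] at hp
    exact fillLast_mem hp.1 hp.2
  · simp only [mem_sigma, mem_horizontalStripsBelow] at hp
    rw [eraseLast_fillLast, shapeOf_eq hp.2 fun i => (hp.1.1 i).trans (hμc i)]

lemma schurPoly_zero {μ : Fin r → ℕ} (hμc : ∀ i, μ i ≤ c) : schurPoly r c 0 μ = gtPoly 0 μ := by
  simp only [schurPoly, univ_eq_empty, prod_empty, sum_const, nsmul_eq_mul, mul_one, gtPoly]
  by_cases hμ : μ = 0
  · subst hμ
    have : ssytFinset r c 0 0 = univ :=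
      eq_univ_of_forall fun T => mem_ssytFinset.mpr ⟨by simp, by simp, by simp⟩
    simp [this]
  · have : ssytFinset r c 0 μ = ∅ := by
      refine eq_empty_of_forall_notMem fun T hT => hμ (funext fun i => ?_)
      have hsupp := (mem_ssytFinset.mp hT).1 i
      exact Nat.le_zero.mp <| Nat.le_of_forall_fin_lt (hμc i) fun j hj =>
        absurd ((hsupp j).mpr hj) (by simp)
    simp [this, hμ]

lemma schurPoly_eq_gtPoly {μ : Fin r → ℕ} (hμ : Antitone μ) (hμc : ∀ i, μ i ≤ c) :
    schurPoly r c e μ = gtPoly e μ := by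
  induction e generalizing μ with
  | zero => exact schurPoly_zero hμc
  | succ e ih =>
    rw [schurPoly_succ hμ hμc, gtPoly]
    refine sum_congr rfl fun ν hν => ?_
    have hνμ := mem_horizontalStripsBelow.mp hν
    rw [ih hνμ.antitone_left fun i => (hνμ.1 i).trans (hμc i)]

end Tableaux
section Conjugation

variable {n l : ℕ}

lemma lt_conjPart_iff {β : Fin n → ℕ} (hβ : Antitone β) (i : Fin n) (j : Fin l) :
    (i : ℕ) < conjPart l β j ↔ (j : ℕ) < β i :=
  hβ.lt_card_filter_lt_iff j i

lemma antitone_conjPart (β : Fin n → ℕ) : Antitone (conjPart l β) := fun _ j' hjj' =>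
  card_le_card <| monotone_filter_right _ fun i _ (h : (j' : ℕ) < β i) =>
    lt_of_le_of_lt (Fin.le_def.mp hjj') h

lemma conjPart_zero : conjPart l (0 : Fin n → ℕ) = 0 := by
  funext j
  simp [conjPart]

lemma conjPart_le (β : Fin n → ℕ) (j : Fin l) : conjPart l β j ≤ n :=
  (card_filter_le _ _).trans (by simp)

lemma conjPart_conjPart {β : Fin n → ℕ} (hβ : Antitone β) (hβl : ∀ i, β i ≤ l) :
    conjPart n (conjPart l β) = β := by
  funext i
  rw [conjPart, filter_congr fun j _ => lt_conjPart_iff hβ i j, Fin.card_filter_val_lt,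
    min_eq_right (hβl i)]

lemma sum_conjPart {β : Fin n → ℕ} (hβl : ∀ i, β i ≤ l) :
    ∑ j, conjPart l β j = ∑ i, β i := by
  simp only [conjPart, card_filter]
  rw [sum_comm]
  refine sum_congr rfl fun i _ => ?_
  rw [← card_filter, Fin.card_filter_val_lt, min_eq_right (hβl i)]

lemma conjPart_mono {ρ β : Fin n → ℕ} (h : ∀ i, ρ i ≤ β i) (j : Fin l) :
    conjPart l ρ j ≤ conjPart l β j :=
  card_le_card <| monotone_filter_right _ fun i _ (hi : (j : ℕ) < ρ i) => hi.trans_le (h i)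

lemma skewSize_conjPart {ρ β : Fin n → ℕ} (hρβ : ∀ i, ρ i ≤ β i) (hβl : ∀ i, β i ≤ l) :
    skewSize (conjPart l β) (conjPart l ρ) = skewSize β ρ := by
  rw [skewSize, skewSize, sum_tsub_distrib _ fun j _ => conjPart_mono hρβ j,
    sum_tsub_distrib _ fun i _ => hρβ i, sum_conjPart hβl,
    sum_conjPart fun i => (hρβ i).trans (hβl i)]

lemma IsVerticalStrip.isHorizontalStrip_conjPart {ρ β : Fin n → ℕ} (h : IsVerticalStrip ρ β) :
    IsHorizontalStrip (conjPart l ρ) (conjPart l β) :=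
  ⟨conjPart_mono fun i => (h.2.2 i).1, fun j j' hjj' =>
    card_le_card <| monotone_filter_right _ fun i _ (hi : (j' : ℕ) < β i) => by
      have := (h.2.2 i).2
      have := Fin.lt_def.mp hjj'
      show (j : ℕ) < ρ i
      omega⟩

lemma IsHorizontalStrip.isVerticalStrip_conjPart {ν μ : Fin l → ℕ} (h : IsHorizontalStrip ν μ) :
    IsVerticalStrip (conjPart n ν) (conjPart n μ) := by
  refine ⟨antitone_conjPart ν, antitone_conjPart μ, fun i => ⟨conjPart_mono h.1 i, ?_⟩⟩
  -- With `k = νᵀᵢ + 1 < μᵀᵢ`, interlacing gives `i < μₖ ≤ νₖ₋₁`, i.e. `k - 1 < νᵀᵢ`.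
  by_contra! hlt
  have hk : conjPart n ν i + 1 < l := hlt.trans_le (conjPart_le μ i)
  have hμk := (h.antitone_right.lt_card_filter_lt_iff i ⟨_, hk⟩).mp hlt
  have hνk := h.2 ⟨conjPart n ν i, by omega⟩ ⟨_, hk⟩ (Fin.lt_def.mpr (by simp))
  have := (h.antitone_left.lt_card_filter_lt_iff i ⟨conjPart n ν i, by omega⟩).mpr
    (hμk.trans_le hνk)
  exact lt_irrefl _ this

lemma gtPoly_succ_conjPart {lam : Fin n → ℕ} (hlam : Antitone lam) (hlaml : ∀ i, lam i ≤ l)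
    (m : ℕ) : gtPoly (m + 1) (conjPart l lam) = ∑ ρ ∈ verticalStripsBelow lam,
      rename Fin.castSucc (gtPoly m (conjPart l ρ)) * X (Fin.last m) ^ skewSize lam ρ := by
  rw [gtPoly]
  refine sum_nbij' (conjPart n) (conjPart l) (fun ν hν => ?_) (fun ρ hρ => ?_) (fun ν hν => ?_)
    (fun ρ hρ => ?_) (fun ν hν => ?_)
  all_goals simp only [mem_horizontalStripsBelow, mem_verticalStripsBelow] at *
  · simpa [conjPart_conjPart hlam hlaml] using hν.isVerticalStrip_conjPart (n := n)
  · exact hρ.isHorizontalStrip_conjPart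
  · exact conjPart_conjPart hν.antitone_left fun j => (hν.1 j).trans (conjPart_le lam j)
  · exact conjPart_conjPart hρ.1 fun i => (hρ.2.2 i).1.trans (hlaml i)
  · have hνn : ∀ j, ν j ≤ n := fun j => (hν.1 j).trans (conjPart_le lam j)
    have hρ := hν.isVerticalStrip_conjPart (n := n)
    rw [conjPart_conjPart hlam hlaml] at hρ
    have hνν := conjPart_conjPart hν.antitone_left hνn
    rw [hνν, ← skewSize_conjPart (l := l) (fun i => (hρ.2.2 i).1) hlaml, hνν]

lemma gtPoly_conjPart_eq_zero {m : ℕ} {ρ : Fin n → ℕ} {i : Fin n} (hρl : ρ i ≤ l)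
    (hmi : m < ρ i) : gtPoly m (conjPart l ρ) = 0 :=
  gtPoly_eq_zero_of_le_of_ne_zero (i := ⟨m, by omega⟩) le_rfl <|
    card_ne_zero_of_mem (mem_filter.mpr ⟨mem_univ i, hmi⟩)

end Conjugation

def extendByZero {n : ℕ} (a : Fin n → ℕ) (k : ℕ) : ℕ := if h : k < n then a ⟨k, h⟩ else 0

section ExtendByZero

variable {n : ℕ} {a : Fin n → ℕ}

@[simp]
lemma extendByZero_val (a : Fin n → ℕ) (i : Fin n) : extendByZero a i = a i := by
  simp [extendByZero]

lemma extendByZero_of_le {k : ℕ} (h : n ≤ k) : extendByZero a k = 0 := by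
  simp [extendByZero, h]

lemma antitone_extendByZero (ha : Antitone a) : Antitone (extendByZero a) := by
  intro k k' hkk'
  unfold DualCauchy.extendByZero
  split_ifs
  · exact ha (Fin.le_def.mpr hkk')
  all_goals omega

end ExtendByZero

section RowIdentity

variable {S : Type*} [CommRing S] (x t : S)

/-- The contributions of one row to the two sides of `sum_filter_verticalStripsAbove`: there
row `i` of `lam` runs over `{b, b + 1}` subject to the interlacing bounds `a ≤ lam i ≤ p`, and row
`i` of `σ` over `{a - 1, a}` subject to `q ≤ σ i ≤ b`, where `p = a (i - 1)` and `q = b (i + 1)`.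
They differ by the ratio of consecutive values of `interlaceFactor`, which telescopes. -/
def upperRowSum (p a b : ℕ) : S :=
  ∑ j ∈ Icc b (b + 1), if a ≤ j ∧ j ≤ p then x ^ (j - a) * t ^ (j - b) else 0

def lowerRowSum (q a b : ℕ) : S :=
  ∑ j ∈ Icc (a - 1) a, if q ≤ j ∧ j ≤ b then x ^ (b - j) * t ^ (a - j) else 0

def interlaceFactor (p q : ℕ) : S := if q < p then 1 + x * t else if q = p then 1 else 0

variable {x t}

lemma upperRowSum_of_le {p a b : ℕ} (h : a ≤ b) :
    upperRowSum x t p a b = x ^ (b - a) * interlaceFactor x t p b := by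
  rw [upperRowSum, sum_Icc_self_add_one, Nat.sub_self, show b + 1 - a = b - a + 1 by omega,
    Nat.add_sub_cancel_left, interlaceFactor]
  split_ifs <;> first | omega | ring

lemma lowerRowSum_of_le {q a b : ℕ} (h : a ≤ b) :
    lowerRowSum x t q a b = x ^ (b - a) * interlaceFactor x t a q := by
  rw [lowerRowSum, interlaceFactor]
  rcases a with _ | a
  · rw [Nat.zero_sub, Icc_self, sum_singleton]
    split_ifs <;> first | omega | ring
  · rw [Nat.add_sub_cancel, sum_Icc_self_add_one, show b - a = b - (a + 1) + 1 by omega,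
      Nat.sub_self, Nat.add_sub_cancel_left]
    split_ifs <;> first | omega | ring

lemma upperRowSum_add_one {p b : ℕ} (h : b < p) : upperRowSum x t p (b + 1) b = t := by
  rw [upperRowSum, sum_Icc_self_add_one, if_neg (by omega), if_pos (by omega), Nat.sub_self,
    Nat.add_sub_cancel_left]
  ring

lemma lowerRowSum_add_one {q b : ℕ} (h : q ≤ b) : lowerRowSum x t q (b + 1) b = t := by
  rw [lowerRowSum, Nat.add_sub_cancel, sum_Icc_self_add_one, if_pos (by omega), if_neg (by omega),
    Nat.sub_self, Nat.add_sub_cancel_left]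
  ring

lemma upperRowSum_mul_interlaceFactor {p a b q : ℕ} (hap : a ≤ p) (hqb : q ≤ b) :
    upperRowSum x t p a b * interlaceFactor x t a q =
      lowerRowSum x t q a b * interlaceFactor x t p b := by
  rcases lt_trichotomy (b + 1) a with h | rfl | h
  · have hU : upperRowSum x t p a b = 0 :=
      sum_eq_zero fun j hj => if_neg (by simp at hj; omega)
    have hL : lowerRowSum x t q a b = 0 :=
      sum_eq_zero fun j hj => if_neg (by simp at hj; omega)
    rw [hU, hL, zero_mul, zero_mul]
  · rw [upperRowSum_add_one (by omega), lowerRowSum_add_one hqb, interlaceFactor, interlaceFactor,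
      if_pos (by omega), if_pos (by omega)]
  · rw [upperRowSum_of_le (by omega), lowerRowSum_of_le (by omega)]
    ring

end RowIdentity

section LocalIdentity

variable {S : Type*} [CommRing S] {m : ℕ} {a b : Fin (m + 1) → ℕ}

lemma pow_skewSize_mul_pow_skewSize (x t : S) {N : ℕ} (μ ν μ' ν' : Fin N → ℕ) :
    x ^ skewSize μ ν * t ^ skewSize μ' ν' = ∏ i, x ^ (μ i - ν i) * t ^ (μ' i - ν' i) := by
  rw [prod_mul_distrib, prod_pow_eq_pow_sum, prod_pow_eq_pow_sum, skewSize, skewSize]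

/-- The upper bound `a (i - 1)` that interlacing with `a` imposes on row `i`; row `0` gets the
bound `a 0 + b 0 + 1`, which the vertical strip condition `lam 0 ≤ b 0 + 1` already implies. -/
def interlacingCap (a b : Fin (m + 1) → ℕ) (k : ℕ) : ℕ :=
  if k = 0 then a 0 + b 0 + 1 else extendByZero a (k - 1)

lemma filter_isHorizontalStrip_verticalStripsAbove (ha : Antitone a) (hb : Antitone b) :
    {lam ∈ verticalStripsAbove b | IsHorizontalStrip a lam} =
      {lam ∈ Fintype.piFinset fun i => Icc (b i) (b i + 1) |
        ∀ i, a i ≤ lam i ∧ lam i ≤ interlacingCap a b i} := by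
  ext lam
  simp only [mem_filter, mem_verticalStripsAbove, Fintype.mem_piFinset, mem_Icc]
  constructor
  · rintro ⟨⟨-, -, hvert⟩, hhor⟩
    refine ⟨hvert, fun i => ⟨hhor.1 i, ?_⟩⟩
    unfold interlacingCap
    split_ifs with hi
    · have := (hvert i).2
      have := (hvert 0).2
      rw [show i = 0 from Fin.ext hi] at *
      omega
    · have := hhor.2 ⟨i - 1, by omega⟩ i (Fin.lt_def.mpr (show (i : ℕ) - 1 < i by omega))
      simpa [extendByZero, show (i : ℕ) - 1 < m + 1 by omega] using this
  · rintro ⟨hvert, hrow⟩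
    have hhor : IsHorizontalStrip a lam := by
      refine ⟨fun i => (hrow i).1, fun i j hij => ?_⟩
      have := (hrow j).2
      rw [interlacingCap, if_neg (by have := Fin.lt_def.mp hij; omega)] at this
      refine this.trans ?_
      have := antitone_extendByZero ha (show (i : ℕ) ≤ j - 1 by have := Fin.lt_def.mp hij; omega)
      simpa using this
    exact ⟨⟨hb, hhor.antitone_right, hvert⟩, hhor⟩

lemma filter_isVerticalStrip_horizontalStripsBelow (ha : Antitone a) (hb : Antitone b) :
    {σ ∈ horizontalStripsBelow b | IsVerticalStrip σ a} =
      {σ ∈ Fintype.piFinset fun i => Icc (a i - 1) (a i) |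
        ∀ i : Fin (m + 1), extendByZero b (i + 1) ≤ σ i ∧ σ i ≤ b i} := by
  ext σ
  simp only [mem_filter, mem_horizontalStripsBelow, Fintype.mem_piFinset, mem_Icc]
  constructor
  · rintro ⟨hhor, -, -, hvert⟩
    refine ⟨fun i => ⟨by have := (hvert i).2; omega, (hvert i).1⟩, fun i => ⟨?_, hhor.1 i⟩⟩
    by_cases hi : (i : ℕ) + 1 < m + 1
    · simpa [extendByZero, hi] using hhor.2 i ⟨i + 1, hi⟩ (Fin.lt_def.mpr (by simp))
    · simp [extendByZero_of_le (not_lt.mp hi)]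
  · rintro ⟨hvert, hrow⟩
    have hhor : IsHorizontalStrip σ b := by
      refine ⟨fun i => (hrow i).2, fun i j hij => ?_⟩
      refine le_trans ?_ (hrow i).1
      have := antitone_extendByZero hb (show (i : ℕ) + 1 ≤ j from Fin.lt_def.mp hij)
      simpa using this
    exact ⟨hhor, hhor.antitone_left, ha, fun i => ⟨(hvert i).2, by have := (hvert i).1; omega⟩⟩

lemma sum_filter_verticalStripsAbove_eq_prod (x t : S) (ha : Antitone a) (hb : Antitone b) :
    ∑ lam ∈ verticalStripsAbove b with IsHorizontalStrip a lam,
        x ^ skewSize lam a * t ^ skewSize lam b =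
      ∏ k ∈ range (m + 1),
        upperRowSum x t (interlacingCap a b k) (extendByZero a k) (extendByZero b k) := by
  rw [filter_isHorizontalStrip_verticalStripsAbove ha hb,
    sum_congr rfl fun lam _ => pow_skewSize_mul_pow_skewSize x t lam a lam b,
    sum_filter_piFinset_forall_prod (fun i => Icc (b i) (b i + 1))
      (fun i j => a i ≤ j ∧ j ≤ interlacingCap a b i) (fun i j => x ^ (j - a i) * t ^ (j - b i)),
    ← Fin.prod_univ_eq_prod_range]
  simp only [extendByZero_val]
  rfl

lemma sum_filter_horizontalStripsBelow_eq_prod (x t : S) (ha : Antitone a) (hb : Antitone b) :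
    ∑ σ ∈ horizontalStripsBelow b with IsVerticalStrip σ a,
        x ^ skewSize b σ * t ^ skewSize a σ =
      ∏ k ∈ range (m + 1),
        lowerRowSum x t (extendByZero b (k + 1)) (extendByZero a k) (extendByZero b k) := by
  rw [filter_isVerticalStrip_horizontalStripsBelow ha hb,
    sum_congr rfl fun σ _ => pow_skewSize_mul_pow_skewSize x t b σ a σ,
    sum_filter_piFinset_forall_prod (fun i => Icc (a i - 1) (a i))
      (fun i j => extendByZero b (i + 1) ≤ j ∧ j ≤ b i) (fun i j => x ^ (b i - j) * t ^ (a i - j)),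
    ← Fin.prod_univ_eq_prod_range]
  simp only [extendByZero_val]
  rfl

/-- Adding a horizontal strip to `a` and a vertical strip to `b` commute up to the factor
`1 + x t`: the inductive step of the Pieri rule. -/
lemma sum_filter_verticalStripsAbove (x t : S) (ha : Antitone a) (hb : Antitone b)
    (hlast : a (Fin.last m) = 0) :
    ∑ lam ∈ verticalStripsAbove b with IsHorizontalStrip a lam,
        x ^ skewSize lam a * t ^ skewSize lam b =
      (1 + x * t) * ∑ σ ∈ horizontalStripsBelow b with IsVerticalStrip σ a,
        x ^ skewSize b σ * t ^ skewSize a σ := by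
  have hcap : ∀ k, extendByZero a k ≤ interlacingCap a b k := by
    rintro (_ | k)
    · simp [interlacingCap, extendByZero]
      omega
    · simpa [interlacingCap] using antitone_extendByZero ha (Nat.le_succ k)
  have htelescope := prod_range_mul_eq_mul_prod_range (N := m + 1)
    (B := fun k => upperRowSum x t (interlacingCap a b k) (extendByZero a k) (extendByZero b k))
    (A := fun k => lowerRowSum x t (extendByZero b (k + 1)) (extendByZero a k) (extendByZero b k))
    (c := fun k => interlaceFactor x t (interlacingCap a b k) (extendByZero b k)) fun k _ => by
      simpa [interlacingCap] using
        upperRowSum_mul_interlaceFactor (hcap k) (antitone_extendByZero hb (Nat.le_succ k))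
  have hbottom : extendByZero b (m + 1) = 0 := extendByZero_of_le le_rfl
  have htop : interlacingCap a b (m + 1) = 0 := (extendByZero_val a (Fin.last m)).trans hlast
  have hfirst : interlaceFactor x t (interlacingCap a b 0) (extendByZero b 0) = 1 + x * t := by
    simp [interlaceFactor, interlacingCap, extendByZero]
  rw [htop, hbottom, hfirst, interlaceFactor, if_neg (lt_irrefl 0), if_pos rfl,
    mul_one] at htelescope
  rw [sum_filter_verticalStripsAbove_eq_prod x t ha hb,
    sum_filter_horizontalStripsBelow_eq_prod x t ha hb, htelescope]

end LocalIdentity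

section Pieri

variable {S : Type*} [CommRing S] {n : ℕ}

lemma sum_verticalStripsAbove_aeval_gtPoly_zero (x : Fin 0 → S) (t : S) (b : Fin n → ℕ) :
    ∑ lam ∈ verticalStripsAbove b, aeval x (gtPoly 0 lam) * t ^ skewSize lam b =
      aeval x (gtPoly 0 b) := by
  have hzero : IsVerticalStrip b 0 ↔ b = 0 := by
    refine ⟨fun h => funext fun i => Nat.le_zero.mp (h.2.2 i).1, fun h => ?_⟩
    subst h
    exact ⟨antitone_const, antitone_const, fun _ => ⟨le_rfl, Nat.zero_le _⟩⟩
  simp only [gtPoly, apply_ite (aeval x), map_one, map_zero, ite_mul, one_mul, zero_mul,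
    sum_ite_eq', mem_verticalStripsAbove, hzero]
  split_ifs with h
  · simp [h, skewSize]
  · rfl

lemma sum_verticalStripsAbove_aeval_gtPoly_succ {e : ℕ} (x : Fin (e + 1) → S) (t : S)
    (b : Fin n → ℕ) :
    ∑ lam ∈ verticalStripsAbove b, aeval x (gtPoly (e + 1) lam) * t ^ skewSize lam b =
      ∑ ν ∈ Fintype.piFinset fun i => Iic (b i + 1), aeval (x ∘ Fin.castSucc) (gtPoly e ν) *
        ∑ lam ∈ verticalStripsAbove b with IsHorizontalStrip ν lam,
          x (Fin.last e) ^ skewSize lam ν * t ^ skewSize lam b := by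
  simp only [aeval_gtPoly_succ, sum_mul, mul_sum]
  refine (sum_comm' fun lam ν => ?_).trans
    (sum_congr rfl fun ν _ => sum_congr rfl fun lam _ => by ring)
  simp only [mem_filter, mem_verticalStripsAbove, mem_horizontalStripsBelow,
    Fintype.mem_piFinset, mem_Iic]
  exact ⟨fun ⟨hv, hh⟩ => ⟨⟨hv, hh⟩, fun i => (hh.1 i).trans (hv.2.2 i).2⟩,
    fun ⟨⟨hv, hh⟩, _⟩ => ⟨hv, hh⟩⟩

lemma sum_verticalStripsAbove_aeval_gtPoly {e : ℕ} (he : e ≤ n) (x : Fin e → S) (t : S)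
    {b : Fin n → ℕ} (hb : Antitone b) :
    ∑ lam ∈ verticalStripsAbove b, aeval x (gtPoly e lam) * t ^ skewSize lam b =
      aeval x (gtPoly e b) * ∏ i, (1 + x i * t) := by
  induction e generalizing b with
  | zero => simp [sum_verticalStripsAbove_aeval_gtPoly_zero]
  | succ e ih =>
    obtain ⟨m, rfl⟩ : ∃ m, n = m + 1 := ⟨n - 1, by omega⟩
    set x' := x ∘ Fin.castSucc
    set xₑ := x (Fin.last e)
    rw [sum_verticalStripsAbove_aeval_gtPoly_succ]
    calc _ = ∑ ν ∈ Fintype.piFinset fun i => Iic (b i + 1), aeval x' (gtPoly e ν) *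
          ((1 + xₑ * t) * ∑ σ ∈ horizontalStripsBelow b with IsVerticalStrip σ ν,
            xₑ ^ skewSize b σ * t ^ skewSize ν σ) := by
          refine sum_congr rfl fun ν _ => ?_
          by_cases hν : gtPoly e ν = 0
          · simp [hν]
          have hlast : ν (Fin.last m) = 0 := by
            by_contra h
            exact hν (gtPoly_eq_zero_of_le_of_ne_zero (by simp; omega) h)
          rw [sum_filter_verticalStripsAbove _ _ (antitone_of_gtPoly_ne_zero hν) hb hlast]
      _ = ∑ σ ∈ horizontalStripsBelow b, ∑ ν ∈ verticalStripsAbove σ,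
            xₑ ^ skewSize b σ * (1 + xₑ * t) * (aeval x' (gtPoly e ν) * t ^ skewSize ν σ) := by
          symm
          refine (sum_comm' (s' := fun ν => {σ ∈ horizontalStripsBelow b | IsVerticalStrip σ ν})
            fun σ ν => ?_).trans (sum_congr rfl fun ν _ => ?_)
          · simp only [mem_filter, mem_verticalStripsAbove, mem_horizontalStripsBelow,
              Fintype.mem_piFinset, mem_Iic]
            exact ⟨fun ⟨hh, hv⟩ => ⟨⟨hh, hv⟩, fun i => (hv.2.2 i).2.trans (by
              have := hh.1 i; omega)⟩, fun ⟨⟨hh, hv⟩, _⟩ => ⟨hh, hv⟩⟩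
          · rw [mul_sum, mul_sum]
            exact sum_congr rfl fun σ _ => by ring
      _ = aeval x (gtPoly (e + 1) b) * ∏ i, (1 + x i * t) := by
          rw [aeval_gtPoly_succ, Fin.prod_univ_castSucc, sum_mul]
          refine sum_congr rfl fun σ hσ => ?_
          rw [← mul_sum, ih (by omega) x' (mem_horizontalStripsBelow.mp hσ).antitone_left]
          simp only [x', xₑ, Function.comp_apply]
          ring

end Pieri

section Cauchy

variable {S : Type*} [CommRing S]

def partitionsInBox (n l : ℕ) : Finset (Fin n → ℕ) :=
  {lam ∈ Fintype.piFinset fun _ => Iic l | Antitone lam}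

@[simp]
lemma mem_partitionsInBox {n l : ℕ} {lam : Fin n → ℕ} :
    lam ∈ partitionsInBox n l ↔ Antitone lam ∧ ∀ i, lam i ≤ l := by
  simp [partitionsInBox, and_comm]

lemma partitionsInBox_zero (n : ℕ) : partitionsInBox n 0 = {0} := by
  ext lam
  simp only [mem_partitionsInBox, nonpos_iff_eq_zero, mem_singleton]
  exact ⟨fun h => funext h.2, fun h => h ▸ ⟨antitone_const, fun _ => rfl⟩⟩

lemma sum_partitionsInBox_eq_sum_fin {M : Type*} [AddCommMonoid M] (n l : ℕ)
    (f : (Fin n → ℕ) → M) :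
    ∑ lam ∈ partitionsInBox n l, f lam =
      ∑ lam : Fin n → Fin (l + 1) with ∀ i i' : Fin n, i ≤ i' → (lam i' : ℕ) ≤ (lam i : ℕ),
        f fun i => lam i := by
  symm
  refine sum_nbij (fun lam i => lam i) (fun lam hlam => ?_) (fun lam _ lam' _ h => ?_)
    (fun μ hμ => ?_) fun _ _ => rfl
  · simp only [mem_filter, mem_univ, true_and] at hlam
    exact mem_partitionsInBox.mpr ⟨fun i i' h => hlam i i' h, fun i => Fin.is_le (lam i)⟩
  · exact funext fun i => Fin.ext (congrFun h i)
  · obtain ⟨hμ, hμl⟩ := mem_partitionsInBox.mp (mem_coe.mp hμ)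
    exact ⟨fun i => ⟨μ i, Nat.lt_succ_of_le (hμl i)⟩, by simpa using fun i i' h => hμ h, rfl⟩

lemma sum_filter_verticalStripsBelow_aeval_gtPoly_conjPart {n L N : ℕ} (hL : L + 1 ≤ N)
    (y : Fin (L + 1) → S) {lam : Fin n → ℕ} (hlam : lam ∈ partitionsInBox n (L + 1)) :
    ∑ ρ ∈ verticalStripsBelow lam with ρ ∈ partitionsInBox n L,
        aeval (y ∘ Fin.castSucc) (gtPoly L (conjPart N ρ)) * y (Fin.last L) ^ skewSize lam ρ =
      aeval y (gtPoly (L + 1) (conjPart N lam)) := by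
  obtain ⟨hlam, hlamL⟩ := mem_partitionsInBox.mp hlam
  rw [gtPoly_succ_conjPart hlam fun i => (hlamL i).trans hL]
  simp only [map_sum, map_mul, map_pow, aeval_rename, aeval_X]
  refine sum_filter_of_ne fun ρ hρ hne => mem_partitionsInBox.mpr
    ⟨(mem_verticalStripsBelow.mp hρ).1, fun i => ?_⟩
  by_contra! hρi
  have hρN : ρ i ≤ N := ((mem_verticalStripsBelow.mp hρ).2.2 i).1.trans ((hlamL i).trans hL)
  simp [gtPoly_conjPart_eq_zero hρN hρi] at hne

/-- Conjugates are taken with a fixed number `N ≥ L` of rows, so that the induction on `L` only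
changes the number of variables. -/
lemma prod_one_add_mul_eq_sum_aeval_gtPoly {n N : ℕ} (x : Fin n → S) :
    ∀ {L : ℕ} (y : Fin L → S), L ≤ N →
      ∏ i, ∏ j, (1 + x i * y j) = ∑ lam ∈ partitionsInBox n L,
        aeval x (gtPoly n lam) * aeval y (gtPoly L (conjPart N lam))
  | 0, y, _ => by simp [partitionsInBox_zero, conjPart_zero, gtPoly]
  | L + 1, y, hL => by
    set y' := y ∘ Fin.castSucc
    set t := y (Fin.last L)
    calc ∏ i, ∏ j, (1 + x i * y j)
        = (∑ ρ ∈ partitionsInBox n L, aeval x (gtPoly n ρ) * aeval y' (gtPoly L (conjPart N ρ))) *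
            ∏ i, (1 + x i * t) := by
          rw [← prod_one_add_mul_eq_sum_aeval_gtPoly x y' (by omega)]
          simp only [Fin.prod_univ_castSucc, prod_mul_distrib]
          rfl
      _ = ∑ ρ ∈ partitionsInBox n L, ∑ lam ∈ verticalStripsAbove ρ,
            aeval x (gtPoly n lam) * (aeval y' (gtPoly L (conjPart N ρ)) * t ^ skewSize lam ρ) := by
          rw [sum_mul]
          refine sum_congr rfl fun ρ hρ => ?_
          rw [mul_right_comm, ← sum_verticalStripsAbove_aeval_gtPoly le_rfl x t
            (mem_partitionsInBox.mp hρ).1, sum_mul]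
          exact sum_congr rfl fun lam _ => by ring
      _ = ∑ lam ∈ partitionsInBox n (L + 1), aeval x (gtPoly n lam) *
            ∑ ρ ∈ verticalStripsBelow lam with ρ ∈ partitionsInBox n L,
              aeval y' (gtPoly L (conjPart N ρ)) * t ^ skewSize lam ρ := by
          simp only [mul_sum]
          refine sum_comm' fun ρ lam => ?_
          simp only [mem_filter, mem_verticalStripsAbove, mem_verticalStripsBelow,
            mem_partitionsInBox]
          exact ⟨fun ⟨hρ, hv⟩ => ⟨⟨hv, hρ⟩, hv.2.1, fun i => (hv.2.2 i).2.trans (by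
            have := hρ.2 i; omega)⟩, fun ⟨⟨hv, hρ⟩, _⟩ => ⟨hρ, hv⟩⟩
      _ = _ := sum_congr rfl fun lam hlam => by
          rw [sum_filter_verticalStripsBelow_aeval_gtPoly_conjPart hL y hlam]

end Cauchy

end DualCauchy

/-- **The dual Cauchy identity.**
In `ℤ[x_1,…,x_n, y_1,…,y_l]`, the product `∏_{i,j} (1 + x_i y_j)` equals
`∑_λ s_λ(x) · s_{λᵀ}(y)`, the sum running over partitions `λ` contained in the
`n × l` rectangle. -/
theorem dual_cauchy_identity (n l : ℕ) :
    (∏ i : Fin n, ∏ j : Fin l,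
        (1 + X (Sum.inl i) * X (Sum.inr j) : MvPolynomial (Fin n ⊕ Fin l) ℤ)) =
    ∑ lam ∈ (Finset.univ : Finset (Fin n → Fin (l + 1))).filter
        (fun lam => ∀ i i' : Fin n, i ≤ i' → (lam i' : ℕ) ≤ (lam i : ℕ)),
      rename Sum.inl (schurPoly n l n (fun i => (lam i : ℕ))) *
        rename Sum.inr (schurPoly l n l (conjPart l (fun i => (lam i : ℕ)))) := by
  open DualCauchy in
  refine (prod_one_add_mul_eq_sum_aeval_gtPoly (N := l) (X ∘ Sum.inl) (X ∘ Sum.inr)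
    le_rfl).trans ?_
  rw [sum_partitionsInBox_eq_sum_fin]
  refine sum_congr rfl fun lam hmem => ?_
  have hlam : Antitone fun i => (lam i : ℕ) := fun i i' h => (mem_filter.mp hmem).2 i i' h
  rw [schurPoly_eq_gtPoly hlam fun i => Fin.is_le (lam i),
    schurPoly_eq_gtPoly (antitone_conjPart _) (conjPart_le _), rename_eq_aeval, rename_eq_aeval]
  rfl
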